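/- Let W_n be the number of total partitions of [n] (sequence A000311, W_1=1, W_2=1, W_3=4). Then for n ≥ 2, W_n = ∑_{1 ≤ i ≤ k ≤ n} (-1)^{k-i} S(n+i-1, i) · C(n+k-1, n+i-1), where S denotes Stirling numbers of the second kind and C binomial coefficients. -/

import Mathlib

open Finset

def wardW : ℕ → ℕ → ℕ
  | 0, 0 => 1
  | 0, _ + 1 => 0
  | _ + 1, 0 => 0
  | n + 1, k + 1 => (k + 1) * wardW n (k + 1) + (n + k + 1) * wardW n k

def stirling2 : ℕ → ℕ → ℕ
  | 0, 0 => 1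
  | 0, _ + 1 => 0
  | _ + 1, 0 => 0
  | n + 1, k + 1 => (k + 1) * stirling2 n (k + 1) + stirling2 n k

lemma stirling2_eq_zero : ∀ {n k : ℕ}, n < k → stirling2 n k = 0
  | 0, _ + 1, _ => rfl
  | n + 1, k + 1, h => by
    have h1 : n < k + 1 := by omega
    have h2 : n < k := by omega
    simp [stirling2, stirling2_eq_zero h1, stirling2_eq_zero h2]

lemma stirling2_self : ∀ n : ℕ, stirling2 n n = 1
  | 0 => rfl
  | n + 1 => by
    simp [stirling2, stirling2_eq_zero (Nat.lt_succ_self n), stirling2_self n]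

lemma wardW_eq_zero : ∀ {m k : ℕ}, m < k → wardW m k = 0
  | 0, _ + 1, _ => rfl
  | m + 1, k + 1, h => by
    have h1 : m < k + 1 := by omega
    have h2 : m < k := by omega
    simp [wardW, wardW_eq_zero h1, wardW_eq_zero h2]

lemma stirling_eq_sum_ward : ∀ m k : ℕ,
    (stirling2 (m + k) k : ℤ) =
      ∑ i ∈ range (k + 1), (Nat.choose (m + k) (m + i) : ℤ) * wardW m i
  | 0, k => by
    rw [Finset.sum_range_succ']
    simp [wardW, stirling2_self]
  | m + 1, 0 => by
    simp [wardW, stirling2]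
  | m + 1, k + 1 => by
    have hs : ((stirling2 (m + 1 + (k + 1)) (k + 1) : ℕ) : ℤ)
        = (k + 1) * stirling2 (m + (k + 1)) (k + 1) + stirling2 (m + 1 + k) k := by
      have : m + 1 + (k + 1) = (m + k + 1) + 1 := by omega
      rw [this, stirling2]
      have h1 : m + (k + 1) = m + k + 1 := by omega
      have h2 : m + 1 + k = m + k + 1 := by omega
      rw [h1, h2]; push_cast; ring
    rw [hs, stirling_eq_sum_ward m (k + 1), stirling_eq_sum_ward (m + 1) k]
    -- Pascal on the RHS (the LHS of the paper identity)
    have pascal : ∀ i ∈ range (k + 2),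
        ((Nat.choose (m + 1 + (k + 1)) (m + 1 + i) : ℤ)) * wardW (m + 1) i
          = (Nat.choose (m + k + 1) (m + i) : ℤ) * wardW (m + 1) i
            + (Nat.choose (m + k + 1) (m + i + 1) : ℤ) * wardW (m + 1) i := by
      intro i _
      have h1 : m + 1 + (k + 1) = (m + k + 1) + 1 := by omega
      have h2 : m + 1 + i = (m + i) + 1 := by omega
      rw [h1, h2, Nat.choose_succ_succ]
      push_cast; ring
    rw [Finset.sum_congr rfl pascal, Finset.sum_add_distrib]
    -- second piece: drop the top (zero) term
    have hB : ∑ i ∈ range (k + 2), (Nat.choose (m + k + 1) (m + i + 1) : ℤ) * wardW (m + 1) i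
        = ∑ i ∈ range (k + 1), (Nat.choose (m + 1 + k) (m + 1 + i) : ℤ) * wardW (m + 1) i := by
      rw [Finset.sum_range_succ]
      have hz : Nat.choose (m + k + 1) (m + (k + 1) + 1) = 0 :=
        Nat.choose_eq_zero_of_lt (by omega)
      rw [hz]
      simp only [Nat.cast_zero, zero_mul, add_zero]
      refine Finset.sum_congr rfl fun i _ => ?_
      rw [show m + 1 + k = m + k + 1 from by omega, show m + 1 + i = m + i + 1 from by omega]
    rw [hB]
    -- remains: A = (k+1) * ∑_{range(k+2)} C(m+k+1, m+i) W(m,i)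
    have hA : ∑ i ∈ range (k + 2), (Nat.choose (m + k + 1) (m + i) : ℤ) * wardW (m + 1) i
        = (↑k + 1) * ∑ i ∈ range (k + 2), (Nat.choose (m + k + 1) (m + i) : ℤ) * wardW m i := by
      rw [Finset.sum_range_succ' _ (k + 1), Finset.mul_sum,
        Finset.sum_range_succ' (fun i => ((k : ℤ) + 1) * ((Nat.choose (m + k + 1) (m + i) : ℤ) * wardW m i)) (k + 1)]
      have hward0 : wardW (m + 1) 0 = 0 := rfl
      rw [hward0]
      simp only [Nat.cast_zero, mul_zero, add_zero]
      -- LHS: ∑_{i∈range(k+1)} C(m+k+1, m+(i+1)) * W(m+1, i+1)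
      have hWrec : ∀ i : ℕ, ((wardW (m + 1) (i + 1) : ℕ) : ℤ)
          = (i + 1) * wardW m (i + 1) + (m + i + 1) * wardW m i := by
        intro i; rw [wardW]; push_cast; ring
      -- g i = (k+1-i) * C(m+k+1, m+i) * W(m,i)
      set g : ℕ → ℤ := fun i => ((k : ℤ) + 1 - i) * (Nat.choose (m + k + 1) (m + i) : ℤ) * wardW m i with hg
      have key : ∀ i ∈ range (k + 1),
          (Nat.choose (m + k + 1) (m + (i + 1)) : ℤ) * wardW (m + 1) (i + 1)
            = ((k : ℤ) + 1) * ((Nat.choose (m + k + 1) (m + (i + 1)) : ℤ) * wardW m (i + 1))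
              - g (i + 1) + g i := by
        intro i hi
        have hile : i ≤ k := by simpa [Nat.lt_succ_iff] using hi
        have hcs : (Nat.choose (m + k + 1) (m + i + 1) : ℤ) * (m + i + 1)
            = (Nat.choose (m + k + 1) (m + i) : ℤ) * (k + 1 - i) := by
          have := Nat.choose_succ_right_eq (m + k + 1) (m + i)
          have hsub : m + k + 1 - (m + i) = k + 1 - i := by omega
          rw [hsub] at this
          have h' : ((Nat.choose (m + k + 1) (m + i + 1) * (m + i + 1) : ℕ) : ℤ)
              = ((Nat.choose (m + k + 1) (m + i) * (k + 1 - i) : ℕ) : ℤ) := by exact_mod_cast this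
          rw [Nat.cast_mul, Nat.cast_mul, Nat.cast_sub (show i ≤ k + 1 by omega)] at h'
          push_cast at h'
          linarith [h']
        rw [hWrec i]
        simp only [hg]
        have h3 : (m + (i + 1)) = m + i + 1 := by omega
        rw [h3]
        push_cast
        linear_combination ((wardW m i : ℤ)) * hcs
      rw [Finset.sum_congr rfl key]
      have hg0 : g 0 = ((k : ℤ) + 1) * (Nat.choose (m + k + 1) (m + 0) : ℤ) * wardW m 0 := by
        simp [hg]
      have hgtop : g (k + 1) = 0 := by simp [hg]
      rw [Finset.sum_add_distrib, Finset.sum_sub_distrib]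
      have tele : ∑ i ∈ range (k + 1), g (i + 1) + g 0
          = ∑ i ∈ range (k + 1), g i + g (k + 1) := by
        rw [← Finset.sum_range_succ' g (k + 1), Finset.sum_range_succ]
      have tele2 : ∑ i ∈ range (k + 1), g (i + 1)
          = ∑ i ∈ range (k + 1), g i + g (k + 1) - g 0 := by linarith [tele]
      rw [tele2, hg0, hgtop]
      ring_nf
    rw [hA]
    ring

lemma neg_one_pow_sub' {d t : ℕ} (h : t ≤ d) : ((-1 : ℤ)) ^ (d - t) = (-1) ^ d * (-1) ^ t := by
  have h1 : (-1 : ℤ) ^ (d - t) * (-1) ^ t = (-1) ^ d := by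
    rw [← pow_add, Nat.sub_add_cancel h]
  have h2 : (-1 : ℤ) ^ t * (-1) ^ t = 1 := by
    rw [← pow_add]; exact Even.neg_one_pow ⟨t, rfl⟩
  calc (-1 : ℤ) ^ (d - t) = (-1) ^ (d - t) * ((-1) ^ t * (-1) ^ t) := by rw [h2, mul_one]
    _ = ((-1) ^ (d - t) * (-1) ^ t) * (-1) ^ t := by ring
    _ = (-1) ^ d * (-1) ^ t := by rw [h1]

lemma ortho (m k j : ℕ) (hj : j ≤ k) :
    ∑ i ∈ range (k + 1),
        (-1 : ℤ) ^ (k - i) * Nat.choose (m + k) (m + i) * Nat.choose (m + i) (m + j)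
      = if j = k then 1 else 0 := by
  rw [Finset.range_eq_Ico, ← Finset.sum_Ico_consecutive _ (Nat.zero_le j) (by omega : j ≤ k + 1)]
  have h0 : ∑ i ∈ Finset.Ico 0 j,
      (-1 : ℤ) ^ (k - i) * Nat.choose (m + k) (m + i) * Nat.choose (m + i) (m + j) = 0 := by
    apply Finset.sum_eq_zero
    intro i hi
    have hlt : m + i < m + j := by simp [Finset.mem_Ico] at hi; omega
    rw [Nat.choose_eq_zero_of_lt hlt]; simp
  rw [h0, zero_add, Finset.sum_Ico_eq_sum_range]
  rw [show k + 1 - j = (k - j) + 1 from by omega]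
  have step : ∀ t ∈ range (k - j + 1),
      (-1 : ℤ) ^ (k - (j + t)) * Nat.choose (m + k) (m + (j + t)) * Nat.choose (m + (j + t)) (m + j)
        = ((Nat.choose (m + k) (m + j) : ℤ)) * ((-1) ^ (k - j) * ((-1) ^ t * (Nat.choose (k - j) t : ℤ))) := by
    intro t ht
    have htd : t ≤ k - j := by simp [Finset.mem_range] at ht; omega
    have hcm := Nat.choose_mul (n := m + k) (show m + j ≤ m + (j + t) by omega)
    rw [show m + k - (m + j) = k - j from by omega, show m + (j + t) - (m + j) = t from by omega] at hcm
    have hcast : ((Nat.choose (m + k) (m + (j + t)) : ℤ)) * (Nat.choose (m + (j + t)) (m + j) : ℤ)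
        = ((Nat.choose (m + k) (m + j) : ℤ)) * (Nat.choose (k - j) t : ℤ) := by exact_mod_cast hcm
    have hpow : (-1 : ℤ) ^ (k - (j + t)) = (-1) ^ (k - j) * (-1) ^ t := by
      rw [show k - (j + t) = (k - j) - t from by omega]; exact neg_one_pow_sub' htd
    rw [hpow]
    linear_combination ((-1 : ℤ) ^ (k - j) * (-1) ^ t) * hcast
  rw [Finset.sum_congr rfl step, ← Finset.mul_sum, ← Finset.mul_sum, Int.alternating_sum_range_choose]
  by_cases h : j = k
  · subst h; simp
  · rw [if_neg (by omega : ¬ k - j = 0), if_neg h]; ring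

lemma ward_eq_alt (m k : ℕ) :
    (wardW m k : ℤ) = ∑ i ∈ range (k + 1),
      (-1 : ℤ) ^ (k - i) * Nat.choose (m + k) (m + i) * stirling2 (m + i) i := by
  symm
  have hrw : ∀ i ∈ range (k + 1),
      (-1 : ℤ) ^ (k - i) * Nat.choose (m + k) (m + i) * stirling2 (m + i) i
        = ∑ j ∈ range (k + 1),
            ((-1 : ℤ) ^ (k - i) * Nat.choose (m + k) (m + i) * Nat.choose (m + i) (m + j)) * wardW m j := by
    intro i hi
    rw [stirling_eq_sum_ward m i]
    have hext : ∑ j ∈ range (i + 1), (Nat.choose (m + i) (m + j) : ℤ) * wardW m j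
        = ∑ j ∈ range (k + 1), (Nat.choose (m + i) (m + j) : ℤ) * wardW m j := by
      apply Finset.sum_subset (Finset.range_subset_range.mpr (by simp [Finset.mem_range] at hi; omega))
      intro j _ hnj
      have hlt : m + i < m + j := by simp [Finset.mem_range] at hnj ⊢; omega
      rw [Nat.choose_eq_zero_of_lt hlt]; simp
    rw [hext, Finset.mul_sum]
    refine Finset.sum_congr rfl fun j _ => by ring
  rw [Finset.sum_congr rfl hrw, Finset.sum_comm]
  have hj : ∀ j ∈ range (k + 1),
      ∑ i ∈ range (k + 1),
          ((-1 : ℤ) ^ (k - i) * Nat.choose (m + k) (m + i) * Nat.choose (m + i) (m + j)) * wardW m j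
        = (if j = k then 1 else 0) * (wardW m j : ℤ) := by
    intro j hjmem
    rw [← Finset.sum_mul, ortho m k j (by simp [Finset.mem_range] at hjmem; omega)]
  rw [Finset.sum_congr rfl hj]
  simp only [ite_mul, one_mul, zero_mul]
  rw [Finset.sum_ite_eq' (range (k + 1)) k]
  simp

/-- The number of total partitions of an `n`-element set (`n ≥ 1`),
expressed as the row sum of Ward numbers. -/
def totalPartitions (n : ℕ) : ℕ := ∑ k ∈ Finset.range n, wardW (n - 1) k

theorem totalPartitions_formula (n : ℕ) (hn : 2 ≤ n) :
    (totalPartitions n : ℤ) =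
      ∑ k ∈ Finset.Icc 1 n, ∑ i ∈ Finset.Icc 1 k,
        (-1 : ℤ) ^ (k - i) * stirling2 (n + i - 1) i * Nat.choose (n + k - 1) (n + i - 1) := by
  obtain ⟨p, rfl⟩ : ∃ p, n = p + 2 := ⟨n - 2, by omega⟩
  have hinner : ∀ k ∈ Finset.Icc 1 (p + 2),
      ∑ i ∈ Finset.Icc 1 k,
          (-1 : ℤ) ^ (k - i) * stirling2 (p + 2 + i - 1) i * Nat.choose (p + 2 + k - 1) (p + 2 + i - 1)
        = (wardW (p + 1) k : ℤ) := by
    intro k hk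
    have h1 : ∀ i, p + 2 + i - 1 = p + 1 + i := fun i => by omega
    simp only [h1]
    have hfull : ∑ i ∈ range (k + 1),
        (-1 : ℤ) ^ (k - i) * stirling2 (p + 1 + i) i * Nat.choose (p + 1 + k) (p + 1 + i)
          = ∑ i ∈ Finset.Icc 1 k,
        (-1 : ℤ) ^ (k - i) * stirling2 (p + 1 + i) i * Nat.choose (p + 1 + k) (p + 1 + i) := by
      rw [Finset.range_eq_Ico,
        ← Finset.sum_Ico_consecutive _ (Nat.zero_le 1) (by omega : 1 ≤ k + 1)]
      have hz : ∑ i ∈ Finset.Ico 0 1,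
          (-1 : ℤ) ^ (k - i) * stirling2 (p + 1 + i) i * Nat.choose (p + 1 + k) (p + 1 + i) = 0 := by
        simp [stirling2]
      rw [hz, zero_add, Finset.Ico_add_one_right_eq_Icc]
    rw [← hfull, ward_eq_alt (p + 1) k]
    refine Finset.sum_congr rfl fun i _ => by ring
  rw [Finset.sum_congr rfl hinner]
  have e1 : ∑ k ∈ Finset.Ico 0 1, (wardW (p + 1) k : ℤ)
        + ∑ k ∈ Finset.Ico 1 (p + 3), (wardW (p + 1) k : ℤ)
      = ∑ k ∈ Finset.Ico 0 (p + 3), (wardW (p + 1) k : ℤ) :=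
    Finset.sum_Ico_consecutive _ (by omega) (by omega)
  have h0 : ∑ k ∈ Finset.Ico 0 1, (wardW (p + 1) k : ℤ) = 0 := by simp [wardW]
  have htop : ∑ k ∈ Finset.Ico 0 (p + 3), (wardW (p + 1) k : ℤ)
      = ∑ k ∈ Finset.Ico 0 (p + 2), (wardW (p + 1) k : ℤ) := by
    rw [show p + 3 = (p + 2) + 1 from rfl, Finset.sum_Ico_succ_top (by omega),
      wardW_eq_zero (by omega : p + 1 < p + 2)]
    simp
  have houter : ∑ k ∈ Finset.Icc 1 (p + 2), (wardW (p + 1) k : ℤ)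
      = ∑ k ∈ Finset.range (p + 2), (wardW (p + 1) k : ℤ) := by
    rw [show Finset.Icc 1 (p + 2) = Finset.Ico 1 (p + 3) from (Finset.Ico_add_one_right_eq_Icc 1 (p + 2)).symm,
      Finset.range_eq_Ico]
    linarith [e1, h0, htop]
  rw [houter]
  unfold totalPartitions
  rw [show p + 2 - 1 = p + 1 from rfl]
  push_cast
  rfl
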